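/- Entropy limit for Markov–Fibonacci coefficients: let ξ, η be real numbers with ξ > 0, η > 0 and ξ + η < 1, and let (i_n), (j_n) be sequences of natural numbers with i_n/n → ξ and j_n/n → η. Then (1/n)·log A_{i_n, j_n}(n) → (1−η)·H(ξ/(1−η)) + (ξ+η)·H(ξ/(ξ+η)) as n → ∞, where A_{i,j}(n) = C(n−1−j, n−i−j)·C(i+j, j) is the coefficient of u^i v^j w^{n−i−j} in the Markov–Fibonacci numerator Q_n. -/

import Mathlib

open Filter

section Aux

open Real

/-- Stirling error: `log n! - n log n + n`. -/
noncomputable def fErr (n : ℕ) : ℝ := Real.log n.factorial - n * Real.log n + n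

lemma fErr_div_tendsto : Tendsto (fun n : ℕ => fErr n / n) atTop (nhds 0) := by
  have hs : Tendsto (fun n : ℕ => Real.log (Stirling.stirlingSeq n)) atTop
      (nhds (Real.log (Real.sqrt π))) :=
    Stirling.tendsto_stirlingSeq_sqrt_pi.log (by positivity)
  have h1 : Tendsto (fun n : ℕ => Real.log (Stirling.stirlingSeq n) / n) atTop (nhds 0) :=
    hs.div_atTop tendsto_natCast_atTop_atTop
  have hlog : Tendsto (fun n : ℕ => Real.log (2 * n) / n) atTop (nhds 0) := by
    have h := Real.isLittleO_log_id_atTop.tendsto_div_nhds_zero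
    have h2 : Tendsto (fun n : ℕ => (2 * n : ℝ)) atTop atTop :=
      tendsto_natCast_atTop_atTop.const_mul_atTop two_pos
    have h3 : Tendsto (fun n : ℕ => Real.log (2 * n) / (2 * n)) atTop (nhds 0) := by
      exact h.comp h2
    have := h3.const_mul 2
    simp only [mul_zero] at this
    refine this.congr' ?_
    filter_upwards [eventually_gt_atTop 0] with n hn
    have : (n : ℝ) ≠ 0 := Nat.cast_ne_zero.mpr hn.ne'
    field_simp
  have := (h1.add (hlog.const_mul (1/2 : ℝ)))
  simp only [add_zero, mul_zero] at this
  refine this.congr' ?_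
  filter_upwards [eventually_gt_atTop 0] with n hn
  have hn0 : (n : ℝ) ≠ 0 := Nat.cast_ne_zero.mpr hn.ne'
  have hform := Stirling.log_stirlingSeq_formula n
  have hfe : fErr n = Real.log (Stirling.stirlingSeq n) + 1 / 2 * Real.log (2 * n) := by
    have hld : Real.log ((n : ℝ) / Real.exp 1) = Real.log n - 1 := by
      rw [Real.log_div hn0 (Real.exp_ne_zero 1), Real.log_exp]
    rw [fErr, hform, hld]
    ring
  rw [hfe]
  ring

end Aux

/-- The binary entropy function `H(p) = -p·log p - (1-p)·log(1-p)` (with the convention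
`0·log 0 = 0`, automatic since `Real.log 0 = 0`). -/
noncomputable def binEntropy (p : ℝ) : ℝ := -p * Real.log p - (1 - p) * Real.log (1 - p)

/-- `zchoose n k` is the binomial coefficient `C(n,k)` for integer arguments,
equal to `0` unless `0 ≤ k ≤ n`. -/
def zchoose (n k : ℤ) : ℤ := if 0 ≤ k ∧ k ≤ n then n.toNat.choose k.toNat else 0

lemma binEntropy_eq : _root_.binEntropy = Real.binEntropy := by
  ext p
  simp only [_root_.binEntropy, Real.binEntropy, Real.log_inv]
  ring

lemma binEntropy_cont : Continuous _root_.binEntropy := by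
  rw [binEntropy_eq]; exact Real.binEntropy_continuous

lemma binEntropy_symm (p : ℝ) : _root_.binEntropy (1 - p) = _root_.binEntropy p := by
  rw [binEntropy_eq]; exact Real.binEntropy_one_sub p

lemma seq_atTop_of_ratio' (a d : ℕ → ℕ) (α : ℝ) (hα : 0 < α) (hd : Tendsto d atTop atTop)
    (ha : Tendsto (fun n : ℕ => (a n : ℝ) / d n) atTop (nhds α)) :
    Tendsto a atTop atTop := by
  rw [← tendsto_natCast_atTop_iff (R := ℝ)]
  have hdc : Tendsto (fun n : ℕ => (d n : ℝ)) atTop atTop :=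
    tendsto_natCast_atTop_atTop.comp hd
  have hev : ∀ᶠ n : ℕ in atTop, α / 2 * d n ≤ (a n : ℝ) := by
    have h2 : ∀ᶠ n : ℕ in atTop, α / 2 < (a n : ℝ) / d n :=
      ha.eventually (eventually_gt_nhds (by linarith))
    filter_upwards [h2, hd.eventually (eventually_gt_atTop 0)] with n hn hn0
    have hnp : (0:ℝ) < d n := Nat.cast_pos.mpr hn0
    rw [lt_div_iff₀ hnp] at hn
    linarith
  exact tendsto_atTop_mono' _ hev (hdc.const_mul_atTop (by linarith))

lemma log_choose_div (ξ : ℝ) (h0 : 0 < ξ) (h1 : ξ < 1) (a b : ℕ → ℕ)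
    (ha : Tendsto a atTop atTop)
    (hr : Tendsto (fun n : ℕ => (b n : ℝ) / a n) atTop (nhds ξ)) :
    Tendsto (fun n : ℕ => Real.log ((a n).choose (b n) : ℝ) / a n) atTop
      (nhds (_root_.binEntropy ξ)) := by
  set c : ℕ → ℕ := fun n => a n - b n with hc_def
  have hb : Tendsto b atTop atTop := seq_atTop_of_ratio' b a ξ h0 ha hr
  have hba : ∀ᶠ n : ℕ in atTop, b n < a n := by
    have h2 : ∀ᶠ n : ℕ in atTop, (b n : ℝ) / a n < 1 := hr.eventually (eventually_lt_nhds h1)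
    filter_upwards [h2, ha.eventually (eventually_gt_atTop 0)] with n hn hn0
    have hnp : (0:ℝ) < a n := Nat.cast_pos.mpr hn0
    rw [div_lt_one hnp] at hn
    exact_mod_cast hn
  have hrc : Tendsto (fun n : ℕ => (c n : ℝ) / a n) atTop (nhds (1 - ξ)) := by
    refine (tendsto_const_nhds.sub hr).congr' ?_
    filter_upwards [hba, ha.eventually (eventually_gt_atTop 0)] with n hn hn0
    have hnp : (0:ℝ) < a n := Nat.cast_pos.mpr hn0
    have : (c n : ℝ) = (a n : ℝ) - b n := by
      simp only [hc_def]
      push_cast [Nat.cast_sub hn.le]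
      ring
    rw [this]
    field_simp
  have hc : Tendsto c atTop atTop := seq_atTop_of_ratio' c a (1 - ξ) (by linarith) ha hrc
  have T1 : Tendsto (fun n : ℕ => _root_.binEntropy ((b n : ℝ) / a n)) atTop
      (nhds (_root_.binEntropy ξ)) :=
    (binEntropy_cont.continuousAt.tendsto).comp hr
  have T2 : Tendsto (fun n : ℕ => fErr (a n) / a n) atTop (nhds 0) := fErr_div_tendsto.comp ha
  have T3 : Tendsto (fun n : ℕ => fErr (b n) / b n * ((b n : ℝ) / a n)) atTop (nhds 0) := by
    have := (fErr_div_tendsto.comp hb).mul hr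
    simpa using this
  have T4 : Tendsto (fun n : ℕ => fErr (c n) / c n * ((c n : ℝ) / a n)) atTop (nhds 0) := by
    have := (fErr_div_tendsto.comp hc).mul hrc
    simpa using this
  have Tall := ((T1.add T2).sub T3).sub T4
  simp only [add_zero, sub_zero] at Tall
  refine Tall.congr' ?_
  filter_upwards [hba, hb.eventually (eventually_gt_atTop 0)] with n hBA hB0
  set A := a n
  set B := b n
  set C := c n
  have hCA : B + C = A := Nat.add_sub_cancel' hBA.le
  have hA0 : (0:ℝ) < A := Nat.cast_pos.mpr (by omega)
  have hB0' : (0:ℝ) < B := Nat.cast_pos.mpr hB0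
  have hC0 : (0:ℝ) < C := Nat.cast_pos.mpr (by omega)
  have hfact : (A.choose B : ℝ) * B.factorial * C.factorial = A.factorial := by
    exact_mod_cast congrArg (Nat.cast (R := ℝ))
      (Nat.choose_mul_factorial_mul_factorial hBA.le)
  have hchoosepos : (0:ℝ) < (A.choose B : ℝ) := Nat.cast_pos.mpr (Nat.choose_pos hBA.le)
  have hlog : Real.log (A.choose B : ℝ) =
      Real.log A.factorial - Real.log B.factorial - Real.log C.factorial := by
    have := Real.log_mul
      (mul_ne_zero hchoosepos.ne' (by positivity : (0:ℝ) < (B.factorial:ℝ)).ne')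
      (by positivity : (0:ℝ) < (C.factorial:ℝ)).ne'
    rw [hfact] at this
    rw [this, Real.log_mul hchoosepos.ne' (by positivity : (0:ℝ) < (B.factorial:ℝ)).ne']
    ring
  have hfA : Real.log A.factorial = fErr A + A * Real.log A - A := by unfold fErr; ring
  have hfB : Real.log B.factorial = fErr B + B * Real.log B - B := by unfold fErr; ring
  have hfC : Real.log C.factorial = fErr C + C * Real.log C - C := by unfold fErr; ring
  have hlogB : Real.log (B : ℝ) = Real.log ((B:ℝ)/A) + Real.log A := by
    rw [Real.log_div hB0'.ne' hA0.ne']; ring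
  have hlogC : Real.log (C : ℝ) = Real.log ((C:ℝ)/A) + Real.log A := by
    rw [Real.log_div hC0.ne' hA0.ne']; ring
  have hABC : (B:ℝ) + C = A := by exact_mod_cast congrArg (Nat.cast (R := ℝ)) hCA
  have h1sub : 1 - (B:ℝ)/A = (C:ℝ)/A := by field_simp; linarith
  show _root_.binEntropy ((B:ℝ)/A) + fErr A / A - fErr B / B * ((B:ℝ)/A)
      - fErr C / C * ((C:ℝ)/A) = Real.log (A.choose B : ℝ) / A
  rw [hlog, hfA, hfB, hfC, hlogB, hlogC]
  unfold _root_.binEntropy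
  rw [h1sub]
  field_simp
  linear_combination (Real.log (A:ℝ) - 1) * hABC

/-- Entropy limit for the Markov–Fibonacci coefficients
`A_{i,j}(n) = C(n-1-j, n-i-j)·C(i+j, j)`: if `i n / n → ξ` and `j n / n → η` with
`ξ, η > 0`, `ξ + η < 1`, then
`(1/n)·log A_{i n, j n}(n) → (1-η)·H(ξ/(1-η)) + (ξ+η)·H(ξ/(ξ+η))`. -/
theorem fibonacci_entropy_limit (ξ η : ℝ) (hξ : 0 < ξ) (hη : 0 < η) (hsum : ξ + η < 1)
    (i j : ℕ → ℕ)
    (hi : Tendsto (fun n : ℕ => (i n : ℝ) / n) atTop (nhds ξ))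
    (hj : Tendsto (fun n : ℕ => (j n : ℝ) / n) atTop (nhds η)) :
    Tendsto
      (fun n : ℕ => (1 / n : ℝ) *
        Real.log ((zchoose ((n : ℤ) - 1 - j n) ((n : ℤ) - i n - j n) *
          ((i n + j n).choose (j n) : ℤ) : ℤ) : ℝ))
      atTop
      (nhds ((1 - η) * binEntropy (ξ / (1 - η)) + (ξ + η) * binEntropy (ξ / (ξ + η)))) := by
  have hη1 : (0:ℝ) < 1 - η := by linarith
  have hξη : (0:ℝ) < ξ + η := by linarith
  have h1ξη : (0:ℝ) < 1 - ξ - η := by linarith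
  set a1 : ℕ → ℕ := fun n => n - 1 - j n with ha1_def
  set b1 : ℕ → ℕ := fun n => n - i n - j n with hb1_def
  set a2 : ℕ → ℕ := fun n => i n + j n with ha2_def
  -- basic limits
  have hIJ : Tendsto (fun n : ℕ => ((a2 n : ℝ)) / n) atTop (nhds (ξ + η)) := by
    refine (hi.add hj).congr fun n => ?_
    simp only [ha2_def]
    push_cast
    ring
  have hiT : Tendsto i atTop atTop := seq_atTop_of_ratio' i id ξ hξ tendsto_id hi
  have hjT : Tendsto j atTop atTop := seq_atTop_of_ratio' j id η hη tendsto_id hj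
  -- eventual inequality i + j + 1 ≤ n
  have hij_ev : ∀ᶠ n : ℕ in atTop, i n + j n + 1 ≤ n := by
    have h2 : ∀ᶠ n : ℕ in atTop, ((a2 n : ℝ)) / n < 1 :=
      hIJ.eventually (eventually_lt_nhds hsum)
    filter_upwards [h2, eventually_gt_atTop 0] with n hn hn0
    have hnp : (0:ℝ) < n := Nat.cast_pos.mpr hn0
    rw [div_lt_one hnp] at hn
    have : a2 n < n := by exact_mod_cast hn
    simp only [ha2_def] at this
    omega
  have hi1 : ∀ᶠ n : ℕ in atTop, 1 ≤ i n := hiT.eventually (eventually_ge_atTop 1)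
  have hj1 : ∀ᶠ n : ℕ in atTop, 1 ≤ j n := hjT.eventually (eventually_ge_atTop 1)
  -- ratio limits to n for a1, b1
  have h1n : Tendsto (fun n : ℕ => (1:ℝ) / n) atTop (nhds 0) :=
    tendsto_one_div_atTop_nhds_zero_nat
  have ha1n : Tendsto (fun n : ℕ => (a1 n : ℝ) / n) atTop (nhds (1 - η)) := by
    have base : Tendsto (fun n : ℕ => (1:ℝ) - 1/n - (j n : ℝ)/n) atTop (nhds (1 - η)) := by
      have := (tendsto_const_nhds (x := (1:ℝ)) (f := atTop (α := ℕ))).sub h1n |>.sub hj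
      simpa using this
    refine base.congr' ?_
    filter_upwards [hij_ev, eventually_gt_atTop 0] with n hn hn0
    have hnp : (0:ℝ) < n := Nat.cast_pos.mpr hn0
    have hkey : a1 n + (1 + j n) = n := by simp only [ha1_def]; omega
    have hcast : (a1 n : ℝ) + (1 + j n) = n := by exact_mod_cast congrArg (Nat.cast (R := ℝ)) hkey
    have : (a1 n : ℝ) = (n:ℝ) - 1 - j n := by linarith
    rw [this]
    field_simp
  have hb1n : Tendsto (fun n : ℕ => (b1 n : ℝ) / n) atTop (nhds (1 - ξ - η)) := by
    have base : Tendsto (fun n : ℕ => (1:ℝ) - (i n : ℝ)/n - (j n : ℝ)/n) atTop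
        (nhds (1 - ξ - η)) := by
      have := (tendsto_const_nhds (x := (1:ℝ)) (f := atTop (α := ℕ))).sub hi |>.sub hj
      simpa using this
    refine base.congr' ?_
    filter_upwards [hij_ev, eventually_gt_atTop 0] with n hn hn0
    have hnp : (0:ℝ) < n := Nat.cast_pos.mpr hn0
    have hkey : b1 n + (i n + j n) = n := by simp only [hb1_def]; omega
    have hcast : (b1 n : ℝ) + (i n + j n) = n := by
      exact_mod_cast congrArg (Nat.cast (R := ℝ)) hkey
    have : (b1 n : ℝ) = (n:ℝ) - i n - j n := by push_cast at hcast ⊢; linarith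
    rw [this]
    field_simp
  have ha1T : Tendsto a1 atTop atTop := seq_atTop_of_ratio' a1 id (1 - η) hη1 tendsto_id ha1n
  have ha2T : Tendsto a2 atTop atTop := seq_atTop_of_ratio' a2 id (ξ + η) hξη tendsto_id hIJ
  have ha1pos : ∀ᶠ n : ℕ in atTop, 1 ≤ a1 n := ha1T.eventually (eventually_ge_atTop 1)
  have ha2pos : ∀ᶠ n : ℕ in atTop, 1 ≤ a2 n := ha2T.eventually (eventually_ge_atTop 1)
  -- ratios b1/a1 and j/a2
  have hr1 : Tendsto (fun n : ℕ => (b1 n : ℝ) / a1 n) atTop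
      (nhds ((1 - ξ - η) / (1 - η))) := by
    refine ((hb1n.div ha1n hη1.ne')).congr' ?_
    filter_upwards [ha1pos, eventually_gt_atTop 0] with n hn hn0
    have hnp : (0:ℝ) < n := Nat.cast_pos.mpr hn0
    have hap : (0:ℝ) < a1 n := Nat.cast_pos.mpr (by omega)
    simp only [Pi.div_apply]
    field_simp
  have hr2 : Tendsto (fun n : ℕ => (j n : ℝ) / a2 n) atTop (nhds (η / (ξ + η))) := by
    refine ((hj.div hIJ hξη.ne')).congr' ?_
    filter_upwards [ha2pos, eventually_gt_atTop 0] with n hn hn0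
    have hnp : (0:ℝ) < n := Nat.cast_pos.mpr hn0
    have hap : (0:ℝ) < a2 n := Nat.cast_pos.mpr (by omega)
    simp only [Pi.div_apply]
    field_simp
  -- apply the key lemma
  have hρ1a : (0:ℝ) < (1 - ξ - η) / (1 - η) := by positivity
  have hρ1b : (1 - ξ - η) / (1 - η) < 1 := by
    rw [div_lt_one hη1]; linarith
  have hρ2a : (0:ℝ) < η / (ξ + η) := by positivity
  have hρ2b : η / (ξ + η) < 1 := by
    rw [div_lt_one hξη]; linarith
  have L1 := log_choose_div _ hρ1a hρ1b a1 b1 ha1T hr1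
  have L2 := log_choose_div _ hρ2a hρ2b a2 j ha2T hr2
  -- convert to division by n
  have M1 : Tendsto (fun n : ℕ => Real.log ((a1 n).choose (b1 n) : ℝ) / n) atTop
      (nhds (_root_.binEntropy ((1 - ξ - η) / (1 - η)) * (1 - η))) := by
    refine (L1.mul ha1n).congr' ?_
    filter_upwards [ha1pos, eventually_gt_atTop 0] with n hn hn0
    have hnp : (0:ℝ) < n := Nat.cast_pos.mpr hn0
    have hap : (0:ℝ) < a1 n := Nat.cast_pos.mpr (by omega)
    field_simp
  have M2 : Tendsto (fun n : ℕ => Real.log ((a2 n).choose (j n) : ℝ) / n) atTop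
      (nhds (_root_.binEntropy (η / (ξ + η)) * (ξ + η))) := by
    refine (L2.mul hIJ).congr' ?_
    filter_upwards [ha2pos, eventually_gt_atTop 0] with n hn hn0
    have hnp : (0:ℝ) < n := Nat.cast_pos.mpr hn0
    have hap : (0:ℝ) < a2 n := Nat.cast_pos.mpr (by omega)
    field_simp
  -- identify the entropy constants
  have hE1 : _root_.binEntropy ((1 - ξ - η) / (1 - η)) = _root_.binEntropy (ξ / (1 - η)) := by
    have : (1 - ξ - η) / (1 - η) = 1 - ξ / (1 - η) := by field_simp; ring
    rw [this, binEntropy_symm]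
  have hE2 : _root_.binEntropy (η / (ξ + η)) = _root_.binEntropy (ξ / (ξ + η)) := by
    have : η / (ξ + η) = 1 - ξ / (ξ + η) := by field_simp; ring
    rw [this, binEntropy_symm]
  have Tsum := M1.add M2
  rw [hE1] at Tsum
  rw [hE2] at Tsum
  have hgoal : (1 - η) * _root_.binEntropy (ξ / (1 - η)) + (ξ + η) * _root_.binEntropy (ξ / (ξ + η))
      = _root_.binEntropy (ξ / (1 - η)) * (1 - η) + _root_.binEntropy (ξ / (ξ + η)) * (ξ + η) := by
    ring
  rw [hgoal]
  refine Tsum.congr' ?_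
  filter_upwards [hij_ev, hi1, hj1, eventually_gt_atTop 0] with n hn hi1n hj1n hn0
  have hz : zchoose ((n : ℤ) - 1 - j n) ((n : ℤ) - i n - j n) = ((a1 n).choose (b1 n) : ℤ) := by
    rw [zchoose, if_pos (by constructor <;> omega)]
    have h1 : ((n : ℤ) - 1 - j n).toNat = a1 n := by simp only [ha1_def]; omega
    have h2 : ((n : ℤ) - i n - j n).toNat = b1 n := by simp only [hb1_def]; omega
    rw [h1, h2]
  rw [hz]
  have hc1pos : 0 < (a1 n).choose (b1 n) := Nat.choose_pos (by simp only [ha1_def, hb1_def]; omega)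
  have hc2pos : 0 < (a2 n).choose (j n) := Nat.choose_pos (by simp only [ha2_def]; omega)
  have hcast : ((((a1 n).choose (b1 n) : ℤ) * (((i n + j n).choose (j n) : ℤ)) : ℤ) : ℝ)
      = ((a1 n).choose (b1 n) : ℝ) * ((a2 n).choose (j n) : ℝ) := by
    simp only [ha2_def]
    push_cast
    ring
  rw [hcast, Real.log_mul (by exact_mod_cast hc1pos.ne') (by exact_mod_cast hc2pos.ne')]
  have hnp : (0:ℝ) < n := Nat.cast_pos.mpr hn0
  field_simp
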